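/- arXiv:1002.0628 — 3 statements merged into one kernel-verified Lean document; each statement's English description precedes it below -/
import Mathlib

section
/- Let 𝒞 be a reduced (m,n,r)-scheme. If m < 2r, then n = 1. -/
open scoped Classical

namespace CCPaper

variable {V : Type*}

/-- The diagonal relation `Δ_X = {(x,x) : x ∈ X}` on a subset `X ⊆ V`. -/
def diag (X : Set V) : Set (V × V) := {p : V × V | p.1 ∈ X ∧ p.1 = p.2}

/-- The transpose `R^t = {(v,u) : (u,v) ∈ R}` of a relation. -/
def transp (R : Set (V × V)) : Set (V × V) := Prod.swap ⁻¹' R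

/-- The intersection number `|{w : (p.1,w) ∈ R, (w,p.2) ∈ S}|` at a pair `p`. -/
noncomputable def iNum (R S : Set (V × V)) (p : V × V) : ℕ :=
  Nat.card {w : V | (p.1, w) ∈ R ∧ (w, p.2) ∈ S}

/-- `ℛ` is a coherent configuration (scheme) on the finite set `V`:
(C1) `ℛ` consists of nonempty relations partitioning `V × V`;
(C2) the diagonal is a union of relations of `ℛ`;
(C3) `ℛ` is closed under transposition;
(C4) intersection numbers are constant on each relation of `ℛ`. -/
def IsCC [Fintype V] (ℛ : Set (Set (V × V))) : Prop :=
  (∀ R ∈ ℛ, R.Nonempty) ∧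
  (∀ p : V × V, ∃! R, R ∈ ℛ ∧ p ∈ R) ∧
  (∀ R ∈ ℛ, (∃ p ∈ R, p.1 = p.2) → ∀ p ∈ R, p.1 = p.2) ∧
  (∀ R ∈ ℛ, transp R ∈ ℛ) ∧
  (∀ R ∈ ℛ, ∀ S ∈ ℛ, ∀ T ∈ ℛ, ∀ p ∈ T, ∀ q ∈ T, iNum R S p = iNum R S q)

/-- A fiber of the configuration: a nonempty `X ⊆ V` with `Δ_X ∈ ℛ`. -/
def IsFiber [Fintype V] (ℛ : Set (Set (V × V))) (X : Set V) : Prop :=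
  X.Nonempty ∧ diag X ∈ ℛ

/-- `ℛ_{X,Y}`, the set of basis relations contained in `X × Y`. -/
def relsBtw [Fintype V] (ℛ : Set (Set (V × V))) (X Y : Set V) : Set (Set (V × V)) :=
  {R | R ∈ ℛ ∧ R ⊆ X ×ˢ Y}

/-- Out-degree `d_R = |R_out(x)|` (computed at a chosen point of `R`;
for a basis relation of a scheme this is independent of the point). -/
noncomputable def outDeg (R : Set (V × V)) : ℕ :=
  if h : R.Nonempty then Nat.card {y : V | (h.choose.1, y) ∈ R} else 0

/-- In-degree `e_R = |R_in(y)|` (computed at a chosen point of `R`). -/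
noncomputable def inDeg (R : Set (V × V)) : ℕ :=
  if h : R.Nonempty then Nat.card {x : V | (x, h.choose.2) ∈ R} else 0

/-- The structure constant `c_{RS}^T` (computed at a chosen pair of `T`). -/
noncomputable def sConst (R S T : Set (V × V)) : ℕ :=
  if h : T.Nonempty then iNum R S h.choose else 0

/-- The complex product `RS = {T ∈ ℛ : c_{RS}^T > 0}`. -/
def cProd [Fintype V] (ℛ : Set (Set (V × V))) (R S : Set (V × V)) : Set (Set (V × V)) :=
  {T | T ∈ ℛ ∧ 0 < sConst R S T}

/-- A relation is thin if `d_R = e_R = 1`. -/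
def IsThin (R : Set (V × V)) : Prop := outDeg R = 1 ∧ inDeg R = 1

/-- `ℛ` is `r`-balanced: `|ℛ_{X,Y}| = r` for all fibers `X, Y`. -/
def IsBalancedWith [Fintype V] (ℛ : Set (Set (V × V))) (r : ℕ) : Prop :=
  ∀ X Y : Set V, IsFiber ℛ X → IsFiber ℛ Y → Nat.card (relsBtw ℛ X Y) = r

/-- `ℛ` is balanced: `|ℛ_{X,Y}|` is the same for all pairs of fibers. -/
def IsBalanced [Fintype V] (ℛ : Set (Set (V × V))) : Prop := ∃ r : ℕ, IsBalancedWith ℛ r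

/-- An `(m,n,r)`-scheme: a coherent configuration which is `r`-balanced, all of whose
fibers have size `m`, and which has exactly `n` fibers. -/
def IsMNRScheme [Fintype V] (ℛ : Set (Set (V × V))) (m n r : ℕ) : Prop :=
  IsCC ℛ ∧ IsBalancedWith ℛ r ∧ (∀ X : Set V, IsFiber ℛ X → Nat.card X = m) ∧
    Nat.card {X : Set V | IsFiber ℛ X} = n

/-- A scheme is reduced if no basis relation between distinct fibers is thin. -/
def IsReduced [Fintype V] (ℛ : Set (Set (V × V))) : Prop :=
  ∀ X Y : Set V, IsFiber ℛ X → IsFiber ℛ Y → X ≠ Y → ∀ R ∈ relsBtw ℛ X Y, ¬ IsThin R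

/-- A (possibly empty) union of fibers. -/
def IsFiberUnion [Fintype V] (ℛ : Set (Set (V × V))) (U : Set V) : Prop :=
  ∃ F : Set (Set V), (∀ X ∈ F, IsFiber ℛ X) ∧ U = ⋃₀ F

/-- The adjacency matrix of a relation. -/
noncomputable def adjMat [Fintype V] (R : Set (V × V)) : Matrix V V ℂ :=
  fun u v => if (u, v) ∈ R then 1 else 0

/-- The diagonal idempotent `I_X` of a subset `X ⊆ V`. -/
noncomputable def idMat [Fintype V] (X : Set V) : Matrix V V ℂ :=
  fun u v => if u = v ∧ u ∈ X then 1 else 0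

/-- The adjacency algebra `𝒜(𝒞)`, the subalgebra of `Mat_V(ℂ)` spanned by the
adjacency matrices of the basis relations. -/
noncomputable def adjAlg [Fintype V] [DecidableEq V] (ℛ : Set (Set (V × V))) :
    Subalgebra ℂ (Matrix V V ℂ) :=
  Algebra.adjoin ℂ (adjMat '' ℛ)

/-- `P` is a central primitive idempotent of the (multiplicatively closed) set of
matrices `S`: `P ∈ S` is a nonzero idempotent commuting with everything in `S`, which is
not the sum of two nonzero orthogonal central idempotents of `S`. -/
def IsCPIin [Fintype V] (S : Set (Matrix V V ℂ)) (P : Matrix V V ℂ) : Prop :=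
  P ∈ S ∧ P ≠ 0 ∧ P * P = P ∧ (∀ Q ∈ S, P * Q = Q * P) ∧
  ∀ Q₁ Q₂ : Matrix V V ℂ, Q₁ ∈ S → Q₂ ∈ S →
    Q₁ * Q₁ = Q₁ → Q₂ * Q₂ = Q₂ →
    (∀ M ∈ S, Q₁ * M = M * Q₁) → (∀ M ∈ S, Q₂ * M = M * Q₂) →
    Q₁ * Q₂ = 0 → Q₂ * Q₁ = 0 → P = Q₁ + Q₂ → Q₁ = 0 ∨ Q₂ = 0

/-- `𝒫(𝒞)`: the set of central primitive idempotents of the adjacency algebra. -/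
def CPIs [Fintype V] [DecidableEq V] (ℛ : Set (Set (V × V))) : Set (Matrix V V ℂ) :=
  {P | IsCPIin (adjAlg ℛ : Set (Matrix V V ℂ)) P}

/-- The adjacency algebra `I_X · 𝒜(𝒞) · I_X` of the homogeneous component `𝒞_X`,
as a subset of `Mat_V(ℂ)`. -/
def compAlgSet [Fintype V] [DecidableEq V] (ℛ : Set (Set (V × V))) (X : Set V) :
    Set (Matrix V V ℂ) :=
  {M | ∃ N ∈ adjAlg ℛ, M = idMat X * N * idMat X}

/-- `𝒫(𝒞_X)`: the central primitive idempotents of the homogeneous component `𝒞_X`. -/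
def CPIsComp [Fintype V] [DecidableEq V] (ℛ : Set (Set (V × V))) (X : Set V) :
    Set (Matrix V V ℂ) :=
  {P | IsCPIin (compAlgSet ℛ X) P}

/-- The degree `n_P` of a central primitive idempotent `P` of the algebra (given as the
set `S`): the positive integer with `n_P ^ 2 = dim_ℂ (S · P)`. -/
noncomputable def degOf [Fintype V] [DecidableEq V] (S : Set (Matrix V V ℂ))
    (P : Matrix V V ℂ) : ℕ :=
  Nat.sqrt (Module.finrank ℂ
    (Submodule.span ℂ {M : Matrix V V ℂ | ∃ a ∈ S, M = a * P}))

/-!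
Let `X ≠ Y` be fibers and `x ∈ X`. The neighbourhoods `R(x) = {y : (x, y) ∈ R}`,
`R ∈ ℛ_{X,Y}`, are pairwise disjoint subsets of `Y`, and each has size `d_R ≥ 1`. If
`d_R = 1`, then counting the pairs of `R` in two ways gives `m · 1 = |R| = m · e_R`, so
`e_R = 1` and `R` would be thin. In a reduced scheme therefore every `d_R ≥ 2`, whence
`m = |Y| ≥ 2r`. So `m < 2r` leaves room for only one fiber.
-/

/-- The neighbourhood `R(x)`; the in-neighbourhood of `y` is `outNbr (transp R) y`. -/
def outNbr (R : Set (V × V)) (x : V) : Set V := {y | (x, y) ∈ R}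

lemma iNum_transp_diag (R : Set (V × V)) (x : V) :
    iNum R (transp R) (x, x) = Nat.card (outNbr R x) := by
  simp only [iNum, transp, Set.mem_preimage, Prod.swap_prod_mk, and_self]
  rfl

lemma card_outNbr_eq_card_filter [Fintype V] {Y : Set V} {R : Set (V × V)} {x : V}
    (hY : outNbr R x ⊆ Y) :
    Nat.card (outNbr R x) = (Y.toFinset.filter fun y => (x, y) ∈ R).card := by
  rw [Nat.card_eq_card_toFinset]
  congr 1
  ext y
  simp only [Set.mem_toFinset, Finset.mem_filter]
  exact ⟨fun hxy => ⟨hY hxy, hxy⟩, And.right⟩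

lemma card_mul_eq_card_mul_of_card_outNbr [Fintype V] {X Y : Set V} {R : Set (V × V)}
    (hR : R ⊆ X ×ˢ Y) {d e : ℕ} (hd : ∀ x ∈ X, Nat.card (outNbr R x) = d)
    (he : ∀ y ∈ Y, Nat.card (outNbr (transp R) y) = e) :
    Nat.card X * d = Nat.card Y * e := by
  simp only [Nat.card_eq_card_toFinset]
  refine Finset.card_mul_eq_card_mul (fun x y => (x, y) ∈ R) (fun x hx => ?_) (fun y hy => ?_)
  · rw [← hd x (Set.mem_toFinset.mp hx), card_outNbr_eq_card_filter fun y hxy => (hR hxy).2]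
    rfl
  · rw [← he y (Set.mem_toFinset.mp hy),
      card_outNbr_eq_card_filter (R := transp R) fun x hxy => (hR hxy).1]
    rfl

namespace IsCC

variable [Fintype V] {ℛ : Set (Set (V × V))} {X Y : Set V} {R : Set (V × V)}

lemma transp_mem (hcc : IsCC ℛ) (hR : R ∈ ℛ) : transp R ∈ ℛ := hcc.2.2.2.1 R hR

lemma exists_isFiber_mem (hcc : IsCC ℛ) (v : V) : ∃ X, IsFiber ℛ X ∧ v ∈ X := by
  obtain ⟨R, ⟨hR, hvR⟩, -⟩ := hcc.2.1 (v, v)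
  have hdiag : ∀ p ∈ R, p.1 = p.2 := hcc.2.2.1 R hR ⟨(v, v), hvR, rfl⟩
  have hR_eq : diag {x | (x, x) ∈ R} = R := by
    ext ⟨a, b⟩
    simp only [diag, Set.mem_ofPred_eq]
    constructor
    · rintro ⟨ha, rfl⟩
      exact ha
    · intro hab
      obtain rfl : a = b := hdiag _ hab
      exact ⟨hab, rfl⟩
  refine ⟨{x | (x, x) ∈ R}, ⟨⟨v, hvR⟩, ?_⟩, hvR⟩
  rw [hR_eq]
  exact hR

lemma card_outNbr_eq (hcc : IsCC ℛ) (hX : IsFiber ℛ X) (hR : R ∈ ℛ) {x₁ x₂ : V}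
    (hx₁ : x₁ ∈ X) (hx₂ : x₂ ∈ X) :
    Nat.card (outNbr R x₁) = Nat.card (outNbr R x₂) := by
  rw [← iNum_transp_diag, ← iNum_transp_diag]
  exact hcc.2.2.2.2 R hR (transp R) (hcc.transp_mem hR) (diag X) hX.2
    _ ⟨hx₁, rfl⟩ _ ⟨hx₂, rfl⟩

lemma outDeg_eq (hcc : IsCC ℛ) (hX : IsFiber ℛ X) (hR : R ∈ relsBtw ℛ X Y) {x : V}
    (hx : x ∈ X) : outDeg R = Nat.card (outNbr R x) := by
  have hne : R.Nonempty := hcc.1 R hR.1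
  rw [outDeg, dif_pos hne]
  exact hcc.card_outNbr_eq hX hR.1 (hR.2 hne.choose_spec).1 hx

lemma inDeg_eq (hcc : IsCC ℛ) (hY : IsFiber ℛ Y) (hR : R ∈ relsBtw ℛ X Y) {y : V}
    (hy : y ∈ Y) : inDeg R = Nat.card (outNbr (transp R) y) := by
  have hne : R.Nonempty := hcc.1 R hR.1
  rw [inDeg, dif_pos hne]
  exact hcc.card_outNbr_eq hY (hcc.transp_mem hR.1) (hR.2 hne.choose_spec).2 hy

lemma isThin_of_card_outNbr_eq_one (hcc : IsCC ℛ) (hX : IsFiber ℛ X) (hY : IsFiber ℛ Y)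
    (hcard : Nat.card X = Nat.card Y) (hR : R ∈ relsBtw ℛ X Y) {x : V} (hx : x ∈ X)
    (hone : Nat.card (outNbr R x) = 1) : IsThin R := by
  obtain ⟨y, hy⟩ := hY.1
  have hY_pos : 0 < Nat.card Y := Nat.card_pos_iff.mpr ⟨⟨⟨y, hy⟩⟩, Set.toFinite Y⟩
  have hcount : Nat.card X * 1 = Nat.card Y * Nat.card (outNbr (transp R) y) :=
    card_mul_eq_card_mul_of_card_outNbr hR.2
      (fun x' hx' => (hcc.card_outNbr_eq hX hR.1 hx' hx).trans hone)
      (fun y' hy' => hcc.card_outNbr_eq hY (hcc.transp_mem hR.1) hy' hy)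
  rw [hcard, mul_one] at hcount
  exact ⟨(hcc.outDeg_eq hX hR hx).trans hone,
    (hcc.inDeg_eq hY hR hy).trans ((mul_eq_left₀ hY_pos.ne').mp hcount.symm)⟩

lemma two_le_card_outNbr (hcc : IsCC ℛ) (hred : IsReduced ℛ) (hX : IsFiber ℛ X)
    (hY : IsFiber ℛ Y) (hXY : X ≠ Y) (hcard : Nat.card X = Nat.card Y)
    (hR : R ∈ relsBtw ℛ X Y) {x : V} (hx : x ∈ X) : 2 ≤ Nat.card (outNbr R x) := by
  obtain ⟨p, hp⟩ := hcc.1 R hR.1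
  have hpos : 0 < Nat.card (outNbr R x) := by
    rw [hcc.card_outNbr_eq hX hR.1 hx (hR.2 hp).1]
    exact Nat.card_pos_iff.mpr ⟨⟨⟨p.2, hp⟩⟩, Set.toFinite _⟩
  have hne_one : Nat.card (outNbr R x) ≠ 1 := fun hone =>
    hred X Y hX hY hXY R hR (hcc.isThin_of_card_outNbr_eq_one hX hY hcard hR hx hone)
  omega

lemma two_mul_card_relsBtw_le (hcc : IsCC ℛ) (hred : IsReduced ℛ) (hX : IsFiber ℛ X)
    (hY : IsFiber ℛ Y) (hXY : X ≠ Y) (hcard : Nat.card X = Nat.card Y) :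
    2 * Nat.card (relsBtw ℛ X Y) ≤ Nat.card Y := by
  obtain ⟨x, hx⟩ := hX.1
  have hcount := Finset.card_mul_le_card_mul (fun R y => (x, y) ∈ R)
    (s := (relsBtw ℛ X Y).toFinset) (t := Y.toFinset) (m := 2) (n := 1)
    (fun R hR => ?_) (fun y _ => ?_)
  · simpa only [Nat.card_eq_card_toFinset, mul_comm, one_mul] using hcount
  · rw [Set.mem_toFinset] at hR
    refine (hcc.two_le_card_outNbr hred hX hY hXY hcard hR hx).trans_eq ?_
    exact card_outNbr_eq_card_filter fun y hxy => (hR.2 hxy).2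
  · obtain ⟨_, -, huniq⟩ := hcc.2.1 (x, y)
    refine Finset.card_le_one.mpr fun R hR S hS => ?_
    simp only [Finset.mem_bipartiteBelow, Set.mem_toFinset] at hR hS
    exact (huniq R ⟨hR.1.1, hR.2⟩).trans (huniq S ⟨hS.1.1, hS.2⟩).symm

end IsCC

/-- **Theorem (Statement 3).** If `𝒞` is a reduced `(m,n,r)`-scheme with `m < 2r`,
then `n = 1`. -/
theorem reduced_m_lt_two_r
    {V : Type*} [Fintype V] [Nonempty V]
    (ℛ : Set (Set (V × V))) (m n r : ℕ)
    (h : IsMNRScheme ℛ m n r) (hred : IsReduced ℛ) (hm : m < 2 * r) :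
    n = 1 := by
  obtain ⟨hcc, hbal, hsize, hnum⟩ := h
  have hfiber_eq : ∀ X Y, IsFiber ℛ X → IsFiber ℛ Y → X = Y := by
    intro X Y hX hY
    by_contra hXY
    have := hcc.two_mul_card_relsBtw_le hred hX hY hXY ((hsize X hX).trans (hsize Y hY).symm)
    rw [hbal X Y hX hY, hsize Y hY] at this
    omega
  obtain ⟨X, hX, -⟩ := hcc.exists_isFiber_mem (Classical.arbitrary V)
  rw [← hnum, Nat.card_eq_one_iff_unique]
  exact ⟨⟨fun A B => Subtype.ext (hfiber_eq A B A.2 B.2)⟩, ⟨⟨X, hX⟩⟩⟩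

end CCPaper
end

section
/- Let 𝒞 be an (m,n,r)-scheme and X,Y,Z fibers of 𝒞. If T ∈ ℛ_{X,Y} is such that d_T is coprime to ∏_{R ∈ ℛ_{Y,Z}} d_R, then the multiset d_{Y,Z} = {d_R : R ∈ ℛ_{Y,Z}} coincides with the multiset d_{X,Z} = {d_S : S ∈ ℛ_{X,Z}}, and d_T ≤ min{d_R : R ∈ ℛ_{Y,Z}}. -/
open scoped Classical

/-!
Fix `x ∈ X`. Counting the pairs `(w, z)` with `(x, w) ∈ T`, `(w, z) ∈ R`, `(x, z) ∈ S` in two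
ways gives `d_S c_{TR}^S = d_T c_{SR^t}^T`; the same count for the transposed relations gives
`d_{S^t} c_{TR}^S = d_{R^t} c_{T^t S}^R`, and summing over `S ∈ ℛ_{X,Z}` gives
`∑_S d_S c_{TR}^S = d_T d_R`. Since the fibers have equal sizes, `d_{S^t} = d_S` and
`d_{R^t} = d_R`, so each term of the sum is divisible by the coprime numbers `d_T` and `d_R`:
a single `S = f R` carries the whole sum, and then `c_{T^t (f R)}^R = d_T`. The sum identity for
`T^t` now bounds `∑_{f R = S} d_R` by `d_S`; as both `∑_R d_R` and `∑_S d_S` equal `|Z|` and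
`|ℛ_{Y,Z}| = |ℛ_{X,Z}|`, `f` is a degree-preserving bijection. Finally
`d_T = c_{TR}^{f R}` is at most the in-degree `d_{R^t} = d_R` of `R`.
-/

namespace Finset

theorem exists_eq_of_sum_eq_of_forall_dvd {ι : Type*} {s : Finset ι} {g : ι → ℕ} {K : ℕ}
    (hK : 0 < K) (hsum : ∑ i ∈ s, g i = K) (hdvd : ∀ i ∈ s, K ∣ g i) : ∃ i ∈ s, g i = K := by
  obtain ⟨i, hi, hgi⟩ := exists_ne_zero_of_sum_ne_zero (hsum.trans_ne hK.ne')
  refine ⟨i, hi, le_antisymm ?_ (Nat.le_of_dvd (Nat.pos_of_ne_zero hgi) (hdvd i hi))⟩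
  exact hsum ▸ single_le_sum (fun _ _ => Nat.zero_le _) hi

theorem bijOn_of_sum_fiberwise_le {α β : Type*} [DecidableEq β] {s : Finset α} {t : Finset β}
    {f : α → β} {g : α → ℕ} {h : β → ℕ} (hf : Set.MapsTo f s t) (hpos : ∀ b ∈ t, 0 < h b)
    (hle : ∀ b ∈ t, ∑ a ∈ s with f a = b, g a ≤ h b) (hsum : ∑ a ∈ s, g a = ∑ b ∈ t, h b)
    (hcard : #s = #t) : Set.BijOn f s t ∧ ∀ a ∈ s, h (f a) = g a := by
  have hfiber : ∀ b ∈ t, ∑ a ∈ s with f a = b, g a = h b :=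
    (sum_eq_sum_iff_of_le hle).1 (by rwa [sum_fiberwise_of_maps_to hf])
  have hsurj : Set.SurjOn f s t := by
    intro b hb
    obtain ⟨a, ha, -⟩ := exists_ne_zero_of_sum_ne_zero ((hfiber b hb).trans_ne (hpos b hb).ne')
    obtain ⟨has, rfl⟩ := mem_filter.1 ha
    exact ⟨a, has, rfl⟩
  have hinj : Set.InjOn f s := injOn_of_surjOn_of_card_le f hf hsurj hcard.le
  refine ⟨⟨hf, hinj, hsurj⟩, fun a ha => ?_⟩
  have hsingle : ({a' ∈ s | f a' = f a} : Finset α) = {a} := by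
    ext a'
    simp only [mem_filter, mem_singleton]
    exact ⟨fun h' => hinj h'.1 ha h'.2, by rintro rfl; exact ⟨ha, rfl⟩⟩
  rw [← hfiber (f a) (hf ha), hsingle, sum_singleton]

end Finset

namespace CCPaper

open Finset

variable {V : Type*}

section

variable [Fintype V] {ℛ : Set (Set (V × V))}

noncomputable def outNbhd (R : Set (V × V)) (x : V) : Finset V := {y | (x, y) ∈ R}

@[simp]
theorem mem_outNbhd {R : Set (V × V)} {x y : V} : y ∈ outNbhd R x ↔ (x, y) ∈ R := by
  simp [outNbhd]

theorem sConst_eq_card (hCC : IsCC ℛ) {T R S : Set (V × V)} (hT : T ∈ ℛ) (hR : R ∈ ℛ)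
    (hS : S ∈ ℛ) {x z : V} (hxz : (x, z) ∈ S) :
    sConst T R S = #{w ∈ outNbhd T x | (w, z) ∈ R} := by
  have hne : S.Nonempty := ⟨_, hxz⟩
  rw [sConst, dif_pos hne, hCC.2.2.2.2 T hT R hR S hS _ hne.choose_spec _ hxz]
  simp [iNum, outNbhd, Nat.card_eq_fintype_card, Fintype.card_subtype, filter_filter]

theorem sConst_transp (hCC : IsCC ℛ) {T R S : Set (V × V)} (hT : T ∈ ℛ) (hR : R ∈ ℛ)
    (hS : S ∈ ℛ) : sConst (transp R) (transp T) (transp S) = sConst T R S := by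
  obtain ⟨⟨x, z⟩, hxz⟩ := hCC.1 S hS
  rw [sConst_eq_card hCC hT hR hS hxz, sConst_eq_card hCC (hCC.2.2.2.1 R hR)
    (hCC.2.2.2.1 T hT) (hCC.2.2.2.1 S hS) (x := z) (z := x) hxz]
  simp only [outNbhd, filter_filter, transp, Set.mem_preimage, Prod.swap_prod_mk, and_comm]

theorem fst_mem_of_mem (hCC : IsCC ℛ) {X : Set V} (hX : IsFiber ℛ X) {R : Set (V × V)}
    (hR : R ∈ ℛ) {p q : V × V} (hp : p ∈ R) (hpX : p.1 ∈ X) (hq : q ∈ R) : q.1 ∈ X := by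
  have hpos : 0 < iNum (diag X) R p := by
    rw [iNum, Nat.card_pos_iff]
    exact ⟨⟨⟨p.1, ⟨hpX, rfl⟩, hp⟩⟩, inferInstance⟩
  rw [hCC.2.2.2.2 _ hX.2 R hR R hR p hp q hq, iNum, Nat.card_pos_iff] at hpos
  obtain ⟨⟨⟨w, ⟨hwX, -⟩, -⟩⟩, -⟩ := hpos
  exact hwX

theorem snd_mem_of_mem (hCC : IsCC ℛ) {Y : Set V} (hY : IsFiber ℛ Y) {R : Set (V × V)}
    (hR : R ∈ ℛ) {p q : V × V} (hp : p ∈ R) (hpY : p.2 ∈ Y) (hq : q ∈ R) : q.2 ∈ Y := by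
  have hpos : 0 < iNum R (diag Y) p := by
    rw [iNum, Nat.card_pos_iff]
    exact ⟨⟨⟨p.2, hp, ⟨hpY, rfl⟩⟩⟩, inferInstance⟩
  rw [hCC.2.2.2.2 R hR _ hY.2 R hR p hp q hq, iNum, Nat.card_pos_iff] at hpos
  obtain ⟨⟨⟨w, -, ⟨hwY, hw⟩⟩⟩, -⟩ := hpos
  exact (show w = q.2 from hw) ▸ hwY

theorem mem_relsBtw_of_mem (hCC : IsCC ℛ) {X Y : Set V} (hX : IsFiber ℛ X)
    (hY : IsFiber ℛ Y) {R : Set (V × V)} (hR : R ∈ ℛ) {p : V × V} (hp : p ∈ R)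
    (hpX : p.1 ∈ X) (hpY : p.2 ∈ Y) : R ∈ relsBtw ℛ X Y :=
  ⟨hR, fun _ hq => ⟨fst_mem_of_mem hCC hX hR hp hpX hq, snd_mem_of_mem hCC hY hR hp hpY hq⟩⟩

theorem transp_mem_relsBtw (hCC : IsCC ℛ) {X Y : Set V} {R : Set (V × V)}
    (hR : R ∈ relsBtw ℛ X Y) : transp R ∈ relsBtw ℛ Y X :=
  ⟨hCC.2.2.2.1 R hR.1, fun _ hq => ⟨(hR.2 hq).2, (hR.2 hq).1⟩⟩

theorem outNbhd_subset {X Y : Set V} {R : Set (V × V)} (hR : R ⊆ X ×ˢ Y) (x : V) :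
    ↑(outNbhd R x) ⊆ Y :=
  fun _ hy => (hR (mem_outNbhd.1 hy)).2

theorem outNbhd_eq_filter {X Y : Set V} {R : Set (V × V)} (hR : R ⊆ X ×ˢ Y) (x : V) :
    outNbhd R x = {y ∈ Y.toFinset | (x, y) ∈ R} := by
  ext y
  simp only [mem_outNbhd, mem_filter, Set.mem_toFinset, iff_and_self]
  exact fun hxy => (hR hxy).2

/-- The constancy of `c_{R R^t}^{Δ_X}` on `Δ_X` makes the out-degree independent of `x`. -/
theorem card_outNbhd (hCC : IsCC ℛ) {X Y : Set V} (hX : IsFiber ℛ X) {R : Set (V × V)}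
    (hR : R ∈ relsBtw ℛ X Y) {x : V} (hx : x ∈ X) : #(outNbhd R x) = outDeg R := by
  have hne : R.Nonempty := hCC.1 R hR.1
  have hx₀ : hne.choose.1 ∈ X := (hR.2 hne.choose_spec).1
  have hconst := hCC.2.2.2.2 R hR.1 (transp R) (hCC.2.2.2.1 R hR.1) (diag X) hX.2
    (x, x) ⟨hx, rfl⟩ (hne.choose.1, hne.choose.1) ⟨hx₀, rfl⟩
  rw [outDeg, dif_pos hne]
  simpa [iNum, outNbhd, transp, Nat.card_eq_fintype_card, Fintype.card_subtype] using hconst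

theorem card_eq_sum_relsBtw (hCC : IsCC ℛ) {X Z : Set V} (hX : IsFiber ℛ X) (hZ : IsFiber ℛ Z)
    {x : V} (hx : x ∈ X) {s : Finset V} (hs : ↑s ⊆ Z) :
    #s = ∑ S ∈ (relsBtw ℛ X Z).toFinset, #{z ∈ s | (x, z) ∈ S} := by
  rw [← card_biUnion]
  · congr 1
    ext z
    simp only [mem_biUnion, mem_filter, Set.mem_toFinset]
    refine ⟨fun hz => ?_, fun ⟨_, _, hz, _⟩ => hz⟩
    obtain ⟨S, ⟨hS, hxz⟩, -⟩ := hCC.2.1 (x, z)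
    exact ⟨S, mem_relsBtw_of_mem hCC hX hZ hS hxz hx (hs hz), hz, hxz⟩
  · intro S hS S' hS' hne
    simp only [Function.onFun, disjoint_left, mem_filter]
    rintro z ⟨-, hz⟩ ⟨-, hz'⟩
    exact hne ((hCC.2.1 (x, z)).unique ⟨(Set.mem_toFinset.1 hS).1, hz⟩
      ⟨(Set.mem_toFinset.1 hS').1, hz'⟩)

theorem sum_outDeg_relsBtw (hCC : IsCC ℛ) {X Z : Set V} (hX : IsFiber ℛ X)
    (hZ : IsFiber ℛ Z) : ∑ S ∈ (relsBtw ℛ X Z).toFinset, outDeg S = Nat.card Z := by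
  obtain ⟨x, hx⟩ := hX.1
  rw [Nat.card_eq_card_toFinset, card_eq_sum_relsBtw hCC hX hZ hx (s := Z.toFinset) (by simp)]
  refine sum_congr rfl fun S hS => ?_
  rw [← card_outNbhd hCC hX (Set.mem_toFinset.1 hS) hx,
    outNbhd_eq_filter (Set.mem_toFinset.1 hS).2]

theorem outDeg_pos {R : Set (V × V)} (hR : R.Nonempty) : 0 < outDeg R := by
  rw [outDeg, dif_pos hR, Nat.card_pos_iff]
  exact ⟨⟨⟨_, hR.choose_spec⟩⟩, inferInstance⟩

theorem outDeg_transp (hCC : IsCC ℛ) {X Y : Set V} (hX : IsFiber ℛ X) (hY : IsFiber ℛ Y)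
    (hXY : Nat.card X = Nat.card Y) {R : Set (V × V)} (hR : R ∈ relsBtw ℛ X Y) :
    outDeg (transp R) = outDeg R := by
  have hRt := transp_mem_relsBtw hCC hR
  have hcount : Nat.card X * outDeg R = Nat.card Y * outDeg (transp R) :=
    calc Nat.card X * outDeg R = ∑ x ∈ X.toFinset, #{y ∈ Y.toFinset | (x, y) ∈ R} := by
          rw [Nat.card_eq_card_toFinset, ← smul_eq_mul, ← sum_const]
          refine sum_congr rfl fun x hx => ?_
          rw [← outNbhd_eq_filter hR.2, card_outNbhd hCC hX hR (Set.mem_toFinset.1 hx)]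
      _ = ∑ y ∈ Y.toFinset, #{x ∈ X.toFinset | (x, y) ∈ R} :=
          sum_card_bipartiteAbove_eq_sum_card_bipartiteBelow _
      _ = Nat.card Y * outDeg (transp R) := by
          rw [Nat.card_eq_card_toFinset, ← smul_eq_mul, ← sum_const]
          refine sum_congr rfl fun y hy => ?_
          rw [← card_outNbhd hCC hY hRt (Set.mem_toFinset.1 hy), outNbhd_eq_filter hRt.2]
          rfl
  rw [hXY] at hcount
  exact (Nat.eq_of_mul_eq_mul_left (Nat.card_pos_iff.2 ⟨hY.1.to_subtype, inferInstance⟩)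
    hcount).symm

/-- Both sides count the pairs `(w, z)` with `(x, w) ∈ T`, `(w, z) ∈ R`, `(x, z) ∈ S`. -/
theorem outDeg_mul_sConst_eq_sum (hCC : IsCC ℛ) {X Y Z : Set V} (hX : IsFiber ℛ X)
    {T R S : Set (V × V)} (hT : T ∈ relsBtw ℛ X Y) (hR : R ∈ ℛ) (hS : S ∈ relsBtw ℛ X Z)
    {x : V} (hx : x ∈ X) :
    outDeg S * sConst T R S = ∑ w ∈ outNbhd T x, #{z ∈ outNbhd S x | (w, z) ∈ R} :=
  calc outDeg S * sConst T R S = ∑ z ∈ outNbhd S x, sConst T R S := by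
        rw [sum_const, card_outNbhd hCC hX hS hx, smul_eq_mul]
    _ = ∑ z ∈ outNbhd S x, #{w ∈ outNbhd T x | (w, z) ∈ R} :=
        sum_congr rfl fun _ hz => sConst_eq_card hCC hT.1 hR hS.1 (mem_outNbhd.1 hz)
    _ = _ := sum_card_bipartiteAbove_eq_sum_card_bipartiteBelow (r := fun z w => (w, z) ∈ R)

theorem outDeg_mul_sConst_eq_outDeg_mul_sConst (hCC : IsCC ℛ) {X Y Z : Set V}
    (hX : IsFiber ℛ X) {T R S : Set (V × V)} (hT : T ∈ relsBtw ℛ X Y) (hR : R ∈ ℛ)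
    (hS : S ∈ relsBtw ℛ X Z) : outDeg S * sConst T R S = outDeg T * sConst S (transp R) T := by
  obtain ⟨x, hx⟩ := hX.1
  rw [outDeg_mul_sConst_eq_sum hCC hX hT hR hS hx, ← card_outNbhd hCC hX hT hx, ← smul_eq_mul,
    ← sum_const]
  exact sum_congr rfl fun _ hw =>
    (sConst_eq_card hCC hS.1 (hCC.2.2.2.1 R hR) hT.1 (mem_outNbhd.1 hw)).symm

theorem sum_outDeg_mul_sConst (hCC : IsCC ℛ) {X Y Z : Set V} (hX : IsFiber ℛ X)
    (hY : IsFiber ℛ Y) (hZ : IsFiber ℛ Z) {T R : Set (V × V)} (hT : T ∈ relsBtw ℛ X Y)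
    (hR : R ∈ relsBtw ℛ Y Z) :
    ∑ S ∈ (relsBtw ℛ X Z).toFinset, outDeg S * sConst T R S = outDeg T * outDeg R := by
  obtain ⟨x, hx⟩ := hX.1
  calc ∑ S ∈ (relsBtw ℛ X Z).toFinset, outDeg S * sConst T R S
      = ∑ S ∈ (relsBtw ℛ X Z).toFinset, ∑ w ∈ outNbhd T x, #{z ∈ outNbhd S x | (w, z) ∈ R} :=
        sum_congr rfl fun _ hS =>
          outDeg_mul_sConst_eq_sum hCC hX hT hR.1 (Set.mem_toFinset.1 hS) hx
    _ = ∑ w ∈ outNbhd T x, ∑ S ∈ (relsBtw ℛ X Z).toFinset, #{z ∈ outNbhd R w | (x, z) ∈ S} := by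
        rw [sum_comm]
        simp only [outNbhd, filter_filter, and_comm]
    _ = ∑ w ∈ outNbhd T x, outDeg R := sum_congr rfl fun w hw => by
        rw [← card_eq_sum_relsBtw hCC hX hZ hx (outNbhd_subset hR.2 w),
          card_outNbhd hCC hY hR (hT.2 (mem_outNbhd.1 hw)).2]
    _ = outDeg T * outDeg R := by rw [sum_const, card_outNbhd hCC hX hT hx, smul_eq_mul]

theorem outDeg_transp_mul_sConst_eq (hCC : IsCC ℛ) {X Y Z : Set V} (hZ : IsFiber ℛ Z)
    {T R S : Set (V × V)} (hT : T ∈ ℛ) (hR : R ∈ relsBtw ℛ Y Z) (hS : S ∈ relsBtw ℛ X Z) :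
    outDeg (transp S) * sConst T R S = outDeg (transp R) * sConst (transp T) S R := by
  rw [← sConst_transp hCC hT hR.1 hS.1, ← sConst_transp hCC (hCC.2.2.2.1 T hT) hS.1 hR.1]
  exact outDeg_mul_sConst_eq_outDeg_mul_sConst hCC hZ (transp_mem_relsBtw hCC hR)
    (hCC.2.2.2.1 T hT) (transp_mem_relsBtw hCC hS)

theorem sConst_le_outDeg_transp (hCC : IsCC ℛ) {X Y Z : Set V} (hZ : IsFiber ℛ Z)
    {T R S : Set (V × V)} (hT : T ∈ ℛ) (hR : R ∈ relsBtw ℛ Y Z) (hS : S ∈ relsBtw ℛ X Z) :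
    sConst T R S ≤ outDeg (transp R) := by
  obtain ⟨⟨x, z⟩, hxz⟩ := hCC.1 S hS.1
  rw [sConst_eq_card hCC hT hR.1 hS.1 hxz,
    ← card_outNbhd hCC hZ (transp_mem_relsBtw hCC hR) (hS.2 hxz).2]
  exact card_le_card fun w hw => by simpa [transp] using (mem_filter.1 hw).2

theorem exists_outDeg_mul_sConst_eq_of_coprime (hCC : IsCC ℛ) {X Y Z : Set V}
    (hX : IsFiber ℛ X) (hY : IsFiber ℛ Y) (hZ : IsFiber ℛ Z) (hXZ : Nat.card X = Nat.card Z)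
    (hYZ : Nat.card Y = Nat.card Z) {T R : Set (V × V)} (hT : T ∈ relsBtw ℛ X Y)
    (hR : R ∈ relsBtw ℛ Y Z) (hcop : (outDeg T).Coprime (outDeg R)) :
    ∃ S ∈ relsBtw ℛ X Z, outDeg S * sConst T R S = outDeg T * outDeg R := by
  have hdvd : ∀ S ∈ (relsBtw ℛ X Z).toFinset,
      outDeg T * outDeg R ∣ outDeg S * sConst T R S := by
    intro S hS
    rw [Set.mem_toFinset] at hS
    refine hcop.mul_dvd_of_dvd_of_dvd ?_ ?_
    · exact Dvd.intro _ (outDeg_mul_sConst_eq_outDeg_mul_sConst hCC hX hT hR.1 hS).symm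
    · have h := outDeg_transp_mul_sConst_eq hCC hZ hT.1 hR hS
      rw [outDeg_transp hCC hX hZ hXZ hS, outDeg_transp hCC hY hZ hYZ hR] at h
      exact Dvd.intro _ h.symm
  obtain ⟨S, hS, hSeq⟩ := Finset.exists_eq_of_sum_eq_of_forall_dvd
    (Nat.mul_pos (outDeg_pos (hCC.1 T hT.1)) (outDeg_pos (hCC.1 R hR.1)))
    (sum_outDeg_mul_sConst hCC hX hY hZ hT hR) hdvd
  exact ⟨S, Set.mem_toFinset.1 hS, hSeq⟩

theorem sum_outDeg_preimage_le (hCC : IsCC ℛ) {X Y Z : Set V} (hX : IsFiber ℛ X)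
    (hY : IsFiber ℛ Y) (hZ : IsFiber ℛ Z) (hXY : Nat.card X = Nat.card Y)
    (hXZ : Nat.card X = Nat.card Z) (hYZ : Nat.card Y = Nat.card Z)
    {T : Set (V × V)} (hT : T ∈ relsBtw ℛ X Y) {f : Set (V × V) → Set (V × V)}
    (hf : ∀ R ∈ relsBtw ℛ Y Z, outDeg (f R) * sConst T R (f R) = outDeg T * outDeg R)
    {S : Set (V × V)} (hS : S ∈ relsBtw ℛ X Z) :
    ∑ R ∈ (relsBtw ℛ Y Z).toFinset with f R = S, outDeg R ≤ outDeg S := by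
  have hfiber : ∀ R ∈ relsBtw ℛ Y Z, f R = S →
      outDeg T * outDeg R = outDeg R * sConst (transp T) S R := by
    rintro R hR rfl
    rw [← outDeg_transp hCC hY hZ hYZ hR, ← outDeg_transp_mul_sConst_eq hCC hZ hT.1 hR hS,
      outDeg_transp hCC hX hZ hXZ hS, outDeg_transp hCC hY hZ hYZ hR, hf R hR]
  refine Nat.le_of_mul_le_mul_left ?_ (outDeg_pos (hCC.1 T hT.1))
  calc outDeg T * ∑ R ∈ (relsBtw ℛ Y Z).toFinset with f R = S, outDeg R
      = ∑ R ∈ (relsBtw ℛ Y Z).toFinset with f R = S, outDeg R * sConst (transp T) S R := by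
        rw [mul_sum]
        refine sum_congr rfl fun R hR => ?_
        obtain ⟨hR, hRS⟩ := mem_filter.1 hR
        exact hfiber R (Set.mem_toFinset.1 hR) hRS
    _ ≤ ∑ R ∈ (relsBtw ℛ Y Z).toFinset, outDeg R * sConst (transp T) S R :=
        sum_le_sum_of_subset (filter_subset _ _)
    _ = outDeg T * outDeg S := by
        rw [sum_outDeg_mul_sConst hCC hY hX hZ (transp_mem_relsBtw hCC hT) hS,
          outDeg_transp hCC hX hY hXY hT]

end

theorem coprime_degree_transfer_general
    {V : Type*} [Fintype V]
    (ℛ : Set (Set (V × V))) (m n r : ℕ) (h : IsMNRScheme ℛ m n r)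
    (X Y Z : Set V) (hX : IsFiber ℛ X) (hY : IsFiber ℛ Y) (hZ : IsFiber ℛ Z)
    (T : Set (V × V)) (hT : T ∈ relsBtw ℛ X Y)
    (hcop : Nat.Coprime (outDeg T) (∏ᶠ R ∈ relsBtw ℛ Y Z, outDeg R)) :
    (∃ f : Set (V × V) → Set (V × V),
      Set.BijOn f (relsBtw ℛ Y Z) (relsBtw ℛ X Z) ∧
      ∀ R ∈ relsBtw ℛ Y Z, outDeg (f R) = outDeg R) ∧
    ∀ R ∈ relsBtw ℛ Y Z, outDeg T ≤ outDeg R := by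
  obtain ⟨hCC, hbal, hm, -⟩ := h
  have hXY : Nat.card X = Nat.card Y := (hm X hX).trans (hm Y hY).symm
  have hXZ : Nat.card X = Nat.card Z := (hm X hX).trans (hm Z hZ).symm
  have hYZ : Nat.card Y = Nat.card Z := (hm Y hY).trans (hm Z hZ).symm
  have hcopR : ∀ R ∈ relsBtw ℛ Y Z, (outDeg T).Coprime (outDeg R) := fun R hR =>
    hcop.coprime_dvd_right <| by
      rw [finprod_mem_eq_toFinset_prod]
      exact dvd_prod_of_mem _ (Set.mem_toFinset.2 hR)
  choose! f hfS hf using fun R hR =>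
    exists_outDeg_mul_sConst_eq_of_coprime hCC hX hY hZ hXZ hYZ hT hR (hcopR R hR)
  obtain ⟨hbij, hdeg⟩ := Finset.bijOn_of_sum_fiberwise_le (s := (relsBtw ℛ Y Z).toFinset)
    (t := (relsBtw ℛ X Z).toFinset) (g := outDeg) (h := outDeg)
    (fun R hR => by simpa using hfS R (by simpa using hR))
    (fun S hS => outDeg_pos (hCC.1 S (Set.mem_toFinset.1 hS).1))
    (fun S hS => sum_outDeg_preimage_le hCC hX hY hZ hXY hXZ hYZ hT hf (Set.mem_toFinset.1 hS))
    (by rw [sum_outDeg_relsBtw hCC hY hZ, sum_outDeg_relsBtw hCC hX hZ])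
    (by rw [← Nat.card_eq_card_toFinset, ← Nat.card_eq_card_toFinset, hbal Y Z hY hZ,
      hbal X Z hX hZ])
  simp only [Set.coe_toFinset, Set.mem_toFinset] at hbij hdeg
  refine ⟨⟨f, hbij, hdeg⟩, fun R hR => ?_⟩
  have hc : sConst T R (f R) = outDeg T := Nat.eq_of_mul_eq_mul_left (outDeg_pos (hCC.1 R hR.1))
    (by rw [← hdeg R hR, hf R hR, hdeg R hR, mul_comm])
  calc outDeg T = sConst T R (f R) := hc.symm
    _ ≤ outDeg (transp R) := sConst_le_outDeg_transp hCC hZ hT.1 hR (hfS R hR)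
    _ = outDeg R := outDeg_transp hCC hY hZ hYZ hR

/-- **Theorem (Statement 13).** In an `(m,n,r)`-scheme, if `T ∈ ℛ_{X,Y}` has degree
coprime to `∏_{R ∈ ℛ_{Y,Z}} d_R`, then the multiset of degrees of `ℛ_{Y,Z}` coincides
with that of `ℛ_{X,Z}`, and `d_T ≤ min {d_R : R ∈ ℛ_{Y,Z}}`. -/
theorem coprime_degree_transfer
    {V : Type*} [Fintype V] [Nonempty V]
    (ℛ : Set (Set (V × V))) (m n r : ℕ) (h : IsMNRScheme ℛ m n r)
    (X Y Z : Set V) (hX : IsFiber ℛ X) (hY : IsFiber ℛ Y) (hZ : IsFiber ℛ Z)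
    (T : Set (V × V)) (hT : T ∈ relsBtw ℛ X Y)
    (hcop : Nat.Coprime (outDeg T) (∏ᶠ R ∈ relsBtw ℛ Y Z, outDeg R)) :
    (∃ f : Set (V × V) → Set (V × V),
      Set.BijOn f (relsBtw ℛ Y Z) (relsBtw ℛ X Z) ∧
      ∀ R ∈ relsBtw ℛ Y Z, outDeg (f R) = outDeg R) ∧
    ∀ R ∈ relsBtw ℛ Y Z, outDeg T ≤ outDeg R :=
  coprime_degree_transfer_general ℛ m n r h X Y Z hX hY hZ T hT hcop

end CCPaper
end

section
/- Let 𝒞 be an (m,n,2)-scheme and R ∈ ℛ_{X,Y} for fibers X,Y of 𝒞. Then m − 1 divides d_R(d_R − 1), i.e., d_R(d_R − 1) = λ(m − 1) for some nonnegative integer λ. -/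
/-!
Fix `x ∈ X` and count the pairs `(x', w)` with `x' ∈ X` and `w` a common `R`-out-neighbour of
`x` and `x'`. Grouping by `w` gives `d_R · e_R = d_R²`, as `|X| = |Y|` forces `e_R = d_R`.
Grouping by `x'`: the pair `(x, x)` contributes `d_R`, and since `ℛ_{X,X} = {Δ_X, T}` each of the
`m - 1` pairs `(x, x')` with `x' ≠ x` lies in `T` and contributes `c_{R Rᵗ}^T`.
Hence `d_R (d_R - 1) = (m - 1) c_{R Rᵗ}^T`.
-/

open scoped Classical

namespace CCPaper

variable {V : Type*}

section DegreeDivisibility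

theorem iNum_transp_eq (R : Set (V × V)) (x x' : V) :
    iNum R (transp R) (x, x') = Nat.card {w : V | (x, w) ∈ R ∧ (x', w) ∈ R} :=
  rfl

theorem iNum_transp_right_diag (R : Set (V × V)) (x : V) :
    iNum R (transp R) (x, x) = Nat.card {y : V | (x, y) ∈ R} := by
  simp only [iNum_transp_eq, and_self]

theorem iNum_transp_left_diag (R : Set (V × V)) (y : V) :
    iNum (transp R) R (y, y) = Nat.card {x : V | (x, y) ∈ R} := by
  simp only [iNum, transp, Set.mem_preimage, Prod.swap_prod_mk, and_self]

variable [Fintype V] {ℛ : Set (Set (V × V))}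

theorem natCard_setOf_eq_card_filter (p : V → Prop) :
    Nat.card {v : V | p v} = (Finset.univ.filter p).card := by
  rw [Nat.card_eq_fintype_card, ← Fintype.card_subtype]
  rfl

theorem iNum_pos_iff {R S : Set (V × V)} {p : V × V} :
    0 < iNum R S p ↔ ∃ w, (p.1, w) ∈ R ∧ (w, p.2) ∈ S := by
  rw [iNum, Nat.card_pos_iff, Set.nonempty_coe_sort]
  exact and_iff_left (Set.toFinite _)

theorem IsCC.subset_prod_of_mem (hcc : IsCC ℛ) {S : Set (V × V)} {X Y : Set V}
    (hS : S ∈ ℛ) (hX : IsFiber ℛ X) (hY : IsFiber ℛ Y) {u v : V}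
    (huv : (u, v) ∈ S) (hu : u ∈ X) (hv : v ∈ Y) : S ⊆ X ×ˢ Y := by
  rintro ⟨a, b⟩ hab
  have hleft : 0 < iNum (diag X) S (a, b) := by
    rw [hcc.2.2.2.2 _ hX.2 S hS S hS (a, b) hab (u, v) huv]
    exact iNum_pos_iff.2 ⟨u, ⟨hu, rfl⟩, huv⟩
  have hright : 0 < iNum S (diag Y) (a, b) := by
    rw [hcc.2.2.2.2 S hS _ hY.2 S hS (a, b) hab (u, v) huv]
    exact iNum_pos_iff.2 ⟨v, huv, ⟨hv, rfl⟩⟩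
  obtain ⟨_, ⟨ha, -⟩, -⟩ := iNum_pos_iff.1 hleft
  obtain ⟨w, -, hb, hwb⟩ := iNum_pos_iff.1 hright
  exact ⟨ha, hwb ▸ hb⟩

variable {X Y : Set V} {R : Set (V × V)}

/-- By (C4), `iNum R Rᵗ` is constant on `diag X`, and at `(x, x)` it counts the
out-neighbours of `x`. -/
theorem card_outNbhd_eq_outDeg (hcc : IsCC ℛ) (hR : R ∈ relsBtw ℛ X Y) (hX : IsFiber ℛ X)
    {x : V} (hx : x ∈ X) : Nat.card {y : V | (x, y) ∈ R} = outDeg R := by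
  have hne : R.Nonempty := hcc.1 R hR.1
  rw [outDeg, dif_pos hne, ← iNum_transp_right_diag, ← iNum_transp_right_diag]
  exact hcc.2.2.2.2 R hR.1 (transp R) (hcc.2.2.2.1 R hR.1) (diag X) hX.2
    (x, x) ⟨hx, rfl⟩ (hne.choose.1, hne.choose.1) ⟨(hR.2 hne.choose_spec).1, rfl⟩

theorem card_inNbhd_eq_inDeg (hcc : IsCC ℛ) (hR : R ∈ relsBtw ℛ X Y) (hY : IsFiber ℛ Y)
    {y : V} (hy : y ∈ Y) : Nat.card {x : V | (x, y) ∈ R} = inDeg R := by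
  have hne : R.Nonempty := hcc.1 R hR.1
  rw [inDeg, dif_pos hne, ← iNum_transp_left_diag, ← iNum_transp_left_diag]
  exact hcc.2.2.2.2 (transp R) (hcc.2.2.2.1 R hR.1) R hR.1 (diag Y) hY.2
    (y, y) ⟨hy, rfl⟩ (hne.choose.2, hne.choose.2) ⟨(hR.2 hne.choose_spec).2, rfl⟩

theorem card_mul_outDeg_eq_card_mul_inDeg (hcc : IsCC ℛ) (hR : R ∈ relsBtw ℛ X Y)
    (hX : IsFiber ℛ X) (hY : IsFiber ℛ Y) :
    Nat.card X * outDeg R = Nat.card Y * inDeg R := by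
  have hout : ∀ x, (Finset.univ.filter fun y => (x, y) ∈ R).card
      = if x ∈ X.toFinset then outDeg R else 0 := fun x => by
    by_cases hx : x ∈ X
    · rw [← natCard_setOf_eq_card_filter, card_outNbhd_eq_outDeg hcc hR hX hx,
        if_pos (Set.mem_toFinset.2 hx)]
    · rw [if_neg (by simpa using hx), Finset.card_eq_zero, Finset.filter_eq_empty_iff]
      exact fun y _ hxy => hx (hR.2 hxy).1
  have hin : ∀ y, (Finset.univ.filter fun x => (x, y) ∈ R).card
      = if y ∈ Y.toFinset then inDeg R else 0 := fun y => by
    by_cases hy : y ∈ Y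
    · rw [← natCard_setOf_eq_card_filter, card_inNbhd_eq_inDeg hcc hR hY hy,
        if_pos (Set.mem_toFinset.2 hy)]
    · rw [if_neg (by simpa using hy), Finset.card_eq_zero, Finset.filter_eq_empty_iff]
      exact fun x _ hxy => hy (hR.2 hxy).2
  have hcount := Finset.sum_card_bipartiteAbove_eq_sum_card_bipartiteBelow
    (s := Finset.univ) (t := Finset.univ) (r := fun x y => (x, y) ∈ R)
  simp only [Finset.bipartiteAbove, Finset.bipartiteBelow, hout, hin, Finset.sum_ite_mem,
    Finset.univ_inter, Finset.sum_const, smul_eq_mul, Set.toFinset_card] at hcount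
  simpa only [Nat.card_eq_fintype_card, mul_comm] using hcount

theorem sum_iNum_transp_eq_outDeg_mul_inDeg (hcc : IsCC ℛ) (hR : R ∈ relsBtw ℛ X Y)
    (hX : IsFiber ℛ X) (hY : IsFiber ℛ Y) {x : V} (hx : x ∈ X) :
    ∑ x' ∈ X.toFinset, iNum R (transp R) (x, x') = outDeg R * inDeg R := by
  set N := Finset.univ.filter fun w => (x, w) ∈ R
  have hcount := Finset.sum_card_bipartiteAbove_eq_sum_card_bipartiteBelow
    (s := X.toFinset) (t := N) (r := fun x' w => (x', w) ∈ R)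
  calc ∑ x' ∈ X.toFinset, iNum R (transp R) (x, x')
      = ∑ x' ∈ X.toFinset, (N.bipartiteAbove (fun x' w => (x', w) ∈ R) x').card := by
        refine Finset.sum_congr rfl fun x' _ => ?_
        rw [iNum_transp_eq, natCard_setOf_eq_card_filter, Finset.bipartiteAbove,
          Finset.filter_filter]
        convert rfl
    _ = ∑ w ∈ N, (X.toFinset.bipartiteBelow (fun x' w => (x', w) ∈ R) w).card := hcount
    _ = ∑ _w ∈ N, inDeg R := by
        refine Finset.sum_congr rfl fun w hw => ?_
        have hwY : w ∈ Y := (hR.2 (Finset.mem_filter.1 hw).2).2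
        rw [← card_inNbhd_eq_inDeg hcc hR hY hwY, natCard_setOf_eq_card_filter,
          Finset.bipartiteBelow]
        congr 1
        ext x'
        simpa using fun h : (x', w) ∈ R => (hR.2 h).1
    _ = outDeg R * inDeg R := by
        rw [Finset.sum_const, smul_eq_mul, ← natCard_setOf_eq_card_filter,
          card_outNbhd_eq_outDeg hcc hR hX hx]

theorem exists_offDiag_subset_of_isBalancedWith_two (hcc : IsCC ℛ)
    (hbal : IsBalancedWith ℛ 2) (hX : IsFiber ℛ X) : ∃ T ∈ ℛ, X.offDiag ⊆ T := by
  have hdiag : diag X ∈ relsBtw ℛ X X :=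
    ⟨hX.2, fun p ⟨hp, hpp⟩ => ⟨hp, hpp ▸ hp⟩⟩
  have htwo : (relsBtw ℛ X X).ncard = 2 := by
    rw [← Nat.card_coe_set_eq]; exact hbal X X hX hX
  obtain ⟨T, hT, hTne⟩ := Set.exists_ne_of_one_lt_ncard (s := relsBtw ℛ X X) (by omega) (diag X)
  refine ⟨T, hT.1, fun p hp => ?_⟩
  obtain ⟨hp1, hp2, hne⟩ := Set.mem_offDiag.1 hp
  obtain ⟨S, ⟨hS, hpS⟩, -⟩ := hcc.2.1 p
  have hSrel : S ∈ relsBtw ℛ X X := ⟨hS, hcc.subset_prod_of_mem hS hX hX hpS hp1 hp2⟩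
  have hSne : S ≠ diag X := fun h => hne (h ▸ hpS).2
  obtain ⟨A, B, -, hAB⟩ := Set.ncard_eq_two.1 htwo
  rw [hAB] at hdiag hSrel hT
  have hST : S = T := by
    simp only [Set.mem_insert_iff, Set.mem_singleton_iff] at hdiag hSrel hT
    grind
  exact hST ▸ hpS

theorem sum_iNum_eq_of_offDiag_subset (hcc : IsCC ℛ) {S S' T : Set (V × V)} (hS : S ∈ ℛ)
    (hS' : S' ∈ ℛ) (hT : T ∈ ℛ) (hoff : X.offDiag ⊆ T) {x : V} (hx : x ∈ X) :
    ∑ x' ∈ X.toFinset, iNum S S' (x, x')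
      = iNum S S' (x, x) + (Nat.card X - 1) * sConst S S' T := by
  have hxX : x ∈ X.toFinset := Set.mem_toFinset.2 hx
  have hconst : ∀ x' ∈ X.toFinset.erase x, iNum S S' (x, x') = sConst S S' T := fun x' hx' => by
    obtain ⟨hx'x, hx'X⟩ := Finset.mem_erase.1 hx'
    have hpT : (x, x') ∈ T := hoff ⟨hx, Set.mem_toFinset.1 hx'X, hx'x.symm⟩
    have hne : T.Nonempty := hcc.1 T hT
    rw [sConst, dif_pos hne]
    exact hcc.2.2.2.2 S hS S' hS' T hT _ hpT _ hne.choose_spec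
  rw [← Finset.add_sum_erase _ _ hxX, Finset.sum_congr rfl hconst, Finset.sum_const,
    smul_eq_mul, Finset.card_erase_of_mem hxX, Set.toFinset_card, Nat.card_eq_fintype_card]

end DegreeDivisibility

theorem mn2_degree_divisibility_general
    {V : Type*} [Fintype V]
    (ℛ : Set (Set (V × V))) (m n : ℕ) (h : IsMNRScheme ℛ m n 2)
    (X Y : Set V) (hX : IsFiber ℛ X) (hY : IsFiber ℛ Y)
    (R : Set (V × V)) (hR : R ∈ relsBtw ℛ X Y) :
    (m - 1) ∣ outDeg R * (outDeg R - 1) := by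
  obtain ⟨hcc, hbal, hcard, -⟩ := h
  obtain ⟨x, hx⟩ := hX.1
  have hm : 0 < m := hcard X hX ▸ Nat.card_pos_iff.2 ⟨⟨x, hx⟩, Set.toFinite X⟩
  have hdeg : outDeg R = inDeg R := by
    have hdc := card_mul_outDeg_eq_card_mul_inDeg hcc hR hX hY
    rw [hcard X hX, hcard Y hY] at hdc
    exact Nat.eq_of_mul_eq_mul_left hm hdc
  obtain ⟨T, hT, hoff⟩ := exists_offDiag_subset_of_isBalancedWith_two hcc hbal hX
  have hsum := sum_iNum_eq_of_offDiag_subset hcc hR.1 (hcc.2.2.2.1 R hR.1) hT hoff hx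
  rw [sum_iNum_transp_eq_outDeg_mul_inDeg hcc hR hX hY hx, ← hdeg, hcard X hX,
    iNum_transp_right_diag, card_outNbhd_eq_outDeg hcc hR hX hx] at hsum
  exact ⟨sConst R (transp R) T, by rw [Nat.mul_sub_one, hsum, Nat.add_sub_cancel_left]⟩

/-- **Theorem (Statement 14).** In an `(m,n,2)`-scheme, `m - 1` divides
`d_R (d_R - 1)` for every basis relation `R ∈ ℛ_{X,Y}`. -/
theorem mn2_degree_divisibility
    {V : Type*} [Fintype V] [Nonempty V]
    (ℛ : Set (Set (V × V))) (m n : ℕ) (h : IsMNRScheme ℛ m n 2)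
    (X Y : Set V) (hX : IsFiber ℛ X) (hY : IsFiber ℛ Y)
    (R : Set (V × V)) (hR : R ∈ relsBtw ℛ X Y) :
    (m - 1) ∣ outDeg R * (outDeg R - 1) :=
  mn2_degree_divisibility_general ℛ m n h X Y hX hY R hR

end CCPaper
end
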